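/- Let G be a finite group with augmentation ideal I ⊂ ℤG and ideal (I,2) = ker(ℤG → ℤ/2). There is an isomorphism of ℤG-modules φ : (I,2) → Γ((I,2))/Γ(I) given by φ(2) = [2 ⊗ 2] and φ(g − 1) = [2 ⊗ (g−1) + (g−1) ⊗ 2] for g ∈ G. -/

import Mathlib

/-!
Let `τ = ε/2 : (I,2) → ℤ`. Then `τ 2 = 1` and `τ` vanishes on `I`, so `(I,2) = I ⊕ ℤ·2`, with
retraction `x ↦ x - τ(x)·2` onto `I`. The contraction `F : a ⊗ b ↦ τ(a) b` is `G`-equivariant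
because `ε` is, and sends the symmetric tensor `2 ⊗ y + y ⊗ 2 - τ(y) 2 ⊗ 2` to `y`. Every tensor
`x` is its projection to `I ⊗ I` plus `2 ⊗ F x + F(xᵗ) ⊗ 2 - τ(F x) 2 ⊗ 2`, where `xᵗ` is the
swapped tensor; for `x` symmetric with `F x = 0` only the projection survives, so `F` restricted
to `Γ((I,2))` has kernel `Γ(I)`. This restriction is `ψ`, and `φ = ψ⁻¹` is
`y ↦ [2 ⊗ y + y ⊗ 2 - τ(y) 2 ⊗ 2]`.
-/

open TensorProduct

/-- The submodule of symmetric tensors of `V ⊗[R] V`, i.e. the elements fixed by the swap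
involution `a ⊗ b ↦ b ⊗ a`. -/
noncomputable def symTensorsR (R : Type*) (V : Type*) [CommRing R] [AddCommGroup V]
    [Module R V] :=
  LinearMap.ker ((TensorProduct.comm R V V).toLinearMap - LinearMap.id)

/-- The subgroup of symmetric tensors of `V ⊗[ℤ] V`.  For `V` free abelian this realises
Whitehead's quadratic functor `Γ(V)`. -/
noncomputable abbrev symTensors (V : Type*) [AddCommGroup V] [Module ℤ V] :=
  symTensorsR ℤ V

section SubQuot
variable {R : Type*} [CommRing R] {G : Type*} [Group G] {V : Type*} [AddCommGroup V]
  [Module R V]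

/-- The restriction of a representation to an invariant submodule. -/
def subRep (ρ : Representation R G V) (p : Submodule R V)
    (hp : ∀ g : G, ∀ x ∈ p, ρ g x ∈ p) : Representation R G p where
  toFun g := (ρ g).restrict (hp g)
  map_one' := by
    ext x
    simp [LinearMap.restrict_apply]
  map_mul' g h := by
    ext x
    simp [LinearMap.restrict_apply, map_mul]

/-- The representation induced on the quotient by an invariant submodule. -/
noncomputable def quotRep (ρ : Representation R G V) (p : Submodule R V)
    (hp : ∀ g : G, ∀ x ∈ p, ρ g x ∈ p) : Representation R G (V ⧸ p) where
  toFun g := Submodule.mapQ p p (ρ g) (hp g)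
  map_one' := by
    apply LinearMap.ext
    intro x
    obtain ⟨v, rfl⟩ := Submodule.Quotient.mk_surjective p x
    simp [Submodule.mapQ_apply]
  map_mul' g h := by
    apply LinearMap.ext
    intro x
    obtain ⟨v, rfl⟩ := Submodule.Quotient.mk_surjective p x
    simp [Submodule.mapQ_apply, map_mul]

end SubQuot

section GammaRep
variable {R : Type*} [CommRing R] {G : Type*} [Group G] {V : Type*} [AddCommGroup V]
  [Module R V]

lemma symTensors_invariant (ρ : Representation R G V) :
    ∀ g : G, ∀ x ∈ symTensorsR R V, (ρ.tprod ρ) g x ∈ symTensorsR R V := by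
  intro g x hx
  have key : ∀ y : TensorProduct R V V, (TensorProduct.comm R V V) ((ρ.tprod ρ) g y)
      = (ρ.tprod ρ) g ((TensorProduct.comm R V V) y) := by
    intro y
    induction y using TensorProduct.induction_on with
    | zero => simp
    | tmul a b => simp [Representation.tprod_apply]
    | add y z hy hz =>
        simp only [map_add, hy, hz]
  simp only [symTensorsR, LinearMap.mem_ker, LinearMap.sub_apply,
    LinearMap.id_apply, sub_eq_zero, LinearEquiv.coe_coe] at hx ⊢
  rw [key, hx]

/-- Whitehead's functor `Γ(V)` (realised as the symmetric tensors in `V ⊗ V`) as a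
representation, with the diagonal `G`-action. -/
noncomputable def gammaRep (ρ : Representation R G V) : Representation R G ↥(symTensorsR R V) :=
  subRep (ρ.tprod ρ) (symTensorsR R V) (symTensors_invariant ρ)

/-- The direct sum of two representations. -/
def prodRep {W : Type*} [AddCommGroup W] [Module R W]
    (ρ : Representation R G V) (σ : Representation R G W) : Representation R G (V × W) where
  toFun g := (ρ g).prodMap (σ g)
  map_one' := by
    apply LinearMap.ext
    rintro ⟨a, b⟩
    simp
  map_mul' g h := by
    apply LinearMap.ext
    rintro ⟨a, b⟩
    simp [map_mul]

end GammaRep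

section GroupRing
variable (G : Type*) [Group G]

/-- The left regular representation of `G` on the group ring `ℤG`. -/
noncomputable def regRep : Representation ℤ G (MonoidAlgebra ℤ G) where
  toFun g := LinearMap.mulLeft ℤ (MonoidAlgebra.of ℤ G g)
  map_one' := by
    apply LinearMap.ext; intro x
    simp [MonoidAlgebra.of_apply, ← MonoidAlgebra.one_def]
  map_mul' g h := by
    apply LinearMap.ext; intro x
    simp only [MonoidAlgebra.of_apply, LinearMap.mulLeft_apply, Module.End.mul_apply]
    rw [← mul_assoc, MonoidAlgebra.single_mul_single, mul_one]

/-- The augmentation map `ε : ℤG → ℤ`. -/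
noncomputable def aug : MonoidAlgebra ℤ G →ₐ[ℤ] ℤ := MonoidAlgebra.lift ℤ ℤ G 1

/-- The augmentation ideal `I = ker(ε : ℤG → ℤ)`. -/
noncomputable def augI : Ideal (MonoidAlgebra ℤ G) := RingHom.ker (aug G).toRingHom

/-- The mod 2 augmentation map `ℤG → ℤ/2`. -/
noncomputable def aug2 : MonoidAlgebra ℤ G →+* ZMod 2 :=
  (Int.castRingHom (ZMod 2)).comp (aug G).toRingHom

/-- The ideal `(I, 2) = ker(ℤG → ℤ/2)` generated by the augmentation ideal and `2`. -/
noncomputable def I2 : Ideal (MonoidAlgebra ℤ G) := RingHom.ker (aug2 G)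

/-- The norm element `N = ∑_{g ∈ G} g ∈ ℤG`. -/
noncomputable def Nelt [Fintype G] : MonoidAlgebra ℤ G := ∑ g : G, MonoidAlgebra.of ℤ G g

/-- The (left) ideal of `ℤG` generated by the norm element `N`; the quotient by it is `ℤG/N`. -/
noncomputable def NIdeal [Fintype G] : Ideal (MonoidAlgebra ℤ G) := Ideal.span {Nelt G}

/-- The left ideal `(N, 2)` of `ℤG` generated by the norm element `N` and `2`. -/
noncomputable def N2 [Fintype G] : Ideal (MonoidAlgebra ℤ G) := Ideal.span {Nelt G, 2}

lemma aug_single (g : G) : aug G (MonoidAlgebra.single g 1) = 1 := by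
  simp [aug, MonoidAlgebra.lift_single]

lemma of_sub_one_mem_augI (g : G) :
    MonoidAlgebra.of ℤ G g - 1 ∈ (augI G).restrictScalars ℤ := by
  simp [augI, RingHom.mem_ker, map_sub, aug_single]

lemma of_sub_one_mem_I2 (g : G) :
    MonoidAlgebra.of ℤ G g - 1 ∈ (I2 G).restrictScalars ℤ := by
  simp [I2, aug2, RingHom.mem_ker, map_sub, aug_single]

lemma two_mem_I2 : (2 : MonoidAlgebra ℤ G) ∈ (I2 G).restrictScalars ℤ := by
  have : (aug2 G) 2 = 2 := by simp [map_ofNat]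
  simp [I2, RingHom.mem_ker, this]
  decide

lemma N_mem_I2 [Fintype G] (h : Even (Fintype.card G)) :
    Nelt G ∈ (I2 G).restrictScalars ℤ := by
  have : (aug2 G) (Nelt G) = (Fintype.card G : ZMod 2) := by
    simp [Nelt, map_sum, aug2, aug_single]
  simp only [Submodule.restrictScalars_mem, I2, RingHom.mem_ker, this]
  rw [ZMod.natCast_eq_zero_iff]
  exact h.two_dvd

lemma N_mem_N2 [Fintype G] : Nelt G ∈ (N2 G).restrictScalars ℤ :=
  Ideal.subset_span (by simp)

lemma two_mem_N2 [Fintype G] : (2 : MonoidAlgebra ℤ G) ∈ (N2 G).restrictScalars ℤ :=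
  Ideal.subset_span (by simp)

lemma ideal_invariant (J : Ideal (MonoidAlgebra ℤ G)) :
    ∀ g : G, ∀ x ∈ J.restrictScalars ℤ, (regRep G) g x ∈ J.restrictScalars ℤ := by
  intro g x hx
  exact J.mul_mem_left _ hx

/-- A (left) ideal of `ℤG`, regarded as a representation of `G`. -/
noncomputable def idealRep (J : Ideal (MonoidAlgebra ℤ G)) :
    Representation ℤ G ↥(J.restrictScalars ℤ) :=
  subRep (regRep G) (J.restrictScalars ℤ) (ideal_invariant G J)

/-- The quotient `ℤG/N` of `ℤG` by the ideal generated by the norm element, as a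
representation of `G`. -/
noncomputable def quotNRep [Fintype G] :
    Representation ℤ G (MonoidAlgebra ℤ G ⧸ (NIdeal G).restrictScalars ℤ) :=
  quotRep (regRep G) ((NIdeal G).restrictScalars ℤ) (ideal_invariant G (NIdeal G))

/-- `2` as an element of `(I,2)`. -/
noncomputable def twoI2 : ↥((I2 G).restrictScalars ℤ) := ⟨2, two_mem_I2 G⟩

/-- `g - 1` as an element of `(I,2)`. -/
noncomputable def gm1 (g : G) : ↥((I2 G).restrictScalars ℤ) :=
  ⟨MonoidAlgebra.of ℤ G g - 1, of_sub_one_mem_I2 G g⟩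

/-- `g - 1` as an element of the augmentation ideal `I`. -/
noncomputable def gm1I (g : G) : ↥((augI G).restrictScalars ℤ) :=
  ⟨MonoidAlgebra.of ℤ G g - 1, of_sub_one_mem_augI G g⟩

/-- The norm element as an element of `(I,2)` (for `G` of even order). -/
noncomputable def NeltI2 [Fintype G] (h : Even (Fintype.card G)) :
    ↥((I2 G).restrictScalars ℤ) := ⟨Nelt G, N_mem_I2 G h⟩

/-- The norm element as an element of `(N,2)`. -/
noncomputable def NeltN2 [Fintype G] : ↥((N2 G).restrictScalars ℤ) := ⟨Nelt G, N_mem_N2 G⟩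

end GroupRing

section Stmt7
variable (G : Type*) [Group G]

lemma tmul_self_mem_symTensors {M : Type*} [AddCommGroup M] [Module ℤ M] (a : M) :
    a ⊗ₜ[ℤ] a ∈ symTensors M := by
  simp [symTensors, symTensorsR, LinearMap.mem_ker, LinearMap.sub_apply]

lemma tmul_symm_mem_symTensors {M : Type*} [AddCommGroup M] [Module ℤ M] (a b : M) :
    a ⊗ₜ[ℤ] b + b ⊗ₜ[ℤ] a ∈ symTensors M := by
  simp only [symTensors, symTensorsR, LinearMap.mem_ker, LinearMap.sub_apply,
    LinearMap.id_apply, map_add, LinearEquiv.coe_coe, TensorProduct.comm_tmul]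
  abel

lemma augI_le_I2 : (augI G).restrictScalars ℤ ≤ (I2 G).restrictScalars ℤ := by
  intro x hx
  simp only [Submodule.restrictScalars_mem, augI, I2, RingHom.mem_ker, aug2,
    RingHom.comp_apply, AlgHom.toRingHom_eq_coe, RingHom.coe_coe] at hx ⊢
  rw [hx]
  simp

/-- The inclusion `I ↪ (I,2)`. -/
noncomputable def inclI : ↥((augI G).restrictScalars ℤ) →ₗ[ℤ] ↥((I2 G).restrictScalars ℤ) :=
  Submodule.inclusion (augI_le_I2 G)

/-- `Γ(I)`, viewed as a submodule of `Γ((I,2))` via the inclusion `I ⊆ (I,2)`. -/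
noncomputable def gammaISub : Submodule ℤ ↥(symTensors ↥((I2 G).restrictScalars ℤ)) :=
  Submodule.comap (symTensors ↥((I2 G).restrictScalars ℤ)).subtype
    (Submodule.map (TensorProduct.map (inclI G) (inclI G))
      (symTensors ↥((augI G).restrictScalars ℤ)))


section Contraction
variable {R M N : Type*} [CommRing R] [AddCommGroup M] [Module R M] [AddCommGroup N] [Module R N]

lemma mem_symTensorsR_iff {x : M ⊗[R] M} :
    x ∈ symTensorsR R M ↔ TensorProduct.comm R M M x = x := by
  simp [symTensorsR, sub_eq_zero]

lemma map_mem_symTensorsR (f : N →ₗ[R] M) {x : N ⊗[R] N} (hx : x ∈ symTensorsR R N) :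
    map f f x ∈ symTensorsR R M := by
  rw [mem_symTensorsR_iff] at hx ⊢
  rw [← map_comm, hx]

noncomputable def contractFst (τ : M →ₗ[R] R) : M ⊗[R] M →ₗ[R] M :=
  TensorProduct.lid R M ∘ₗ τ.rTensor M

variable (τ : M →ₗ[R] R) {e : M}

@[simp]
lemma contractFst_tmul (a b : M) : contractFst τ (a ⊗ₜ b) = τ a • b := rfl

lemma contractFst_tprod {H : Type*} [Monoid H] (ρ : Representation R H M) (g : H)
    (hτ : ∀ m, τ (ρ g m) = τ m) (x : M ⊗[R] M) :
    contractFst τ ((ρ.tprod ρ) g x) = ρ g (contractFst τ x) := by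
  have h : contractFst τ ∘ₗ (ρ.tprod ρ) g = ρ g ∘ₗ contractFst τ :=
    TensorProduct.ext' fun a b => by simp [Representation.tprod_apply, hτ]
  exact LinearMap.congr_fun h x

lemma contractFst_comp_subtype_surjective (he : τ e = 1) :
    Function.Surjective (contractFst τ ∘ₗ (symTensorsR R M).subtype) := by
  intro y
  refine ⟨⟨e ⊗ₜ y + y ⊗ₜ e - τ y • (e ⊗ₜ e), ?_⟩, ?_⟩
  · rw [mem_symTensorsR_iff]
    simp only [map_sub, map_add, map_smul, comm_tmul]
    abel
  · simp [he]

variable {ι : N →ₗ[R] M} {π : M →ₗ[R] N}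

lemma contractFst_map_eq_zero (hτι : τ ∘ₗ ι = 0) (y : N ⊗[R] N) :
    contractFst τ (map ι ι y) = 0 := by
  have h : contractFst τ ∘ₗ map ι ι = 0 :=
    TensorProduct.ext' fun a b => by simp [← LinearMap.comp_apply τ ι, hτι]
  exact LinearMap.congr_fun h y

lemma eq_map_map_add_contractFst (hιπ : ∀ m, ι (π m) = m - τ m • e) (x : M ⊗[R] M) :
    x = map ι ι (map π π x) + e ⊗ₜ contractFst τ x
      + contractFst τ (TensorProduct.comm R M M x) ⊗ₜ e - τ (contractFst τ x) • (e ⊗ₜ e) := by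
  induction x using TensorProduct.induction_on with
  | zero => simp
  | tmul a b =>
    simp only [map_tmul, hιπ, comm_tmul, contractFst_tmul, map_smul, smul_eq_mul, tmul_sub,
      sub_tmul, tmul_smul, ← smul_tmul', mul_smul]
    module
  | add x y hx hy =>
    simp only [map_add, tmul_add, add_tmul, add_smul]
    conv_lhs => rw [hx, hy]
    abel

lemma ker_contractFst_comp_subtype (hτι : τ ∘ₗ ι = 0) (hιπ : ∀ m, ι (π m) = m - τ m • e) :
    LinearMap.ker (contractFst τ ∘ₗ (symTensorsR R M).subtype)
      = ((symTensorsR R N).map (map ι ι)).comap (symTensorsR R M).subtype := by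
  ext ⟨x, hx⟩
  simp only [LinearMap.mem_ker, LinearMap.comp_apply, Submodule.subtype_apply,
    Submodule.mem_comap]
  constructor
  · intro h0
    refine ⟨map π π x, map_mem_symTensorsR π hx, ?_⟩
    have hx' := eq_map_map_add_contractFst τ hιπ x
    rw [mem_symTensorsR_iff.mp hx, h0] at hx'
    simpa using hx'.symm
  · rintro ⟨y, -, rfl⟩
    exact contractFst_map_eq_zero τ hτι y

end Contraction

lemma two_dvd_aug (x : ↥((I2 G).restrictScalars ℤ)) : 2 ∣ aug G x := by
  have hx : aug2 G x = 0 := x.2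
  simp only [aug2, RingHom.comp_apply, AlgHom.toRingHom_eq_coe, RingHom.coe_coe,
    Int.coe_castRingHom] at hx
  exact (ZMod.intCast_zmod_eq_zero_iff_dvd _ 2).mp hx

noncomputable def halfAug : ↥((I2 G).restrictScalars ℤ) →ₗ[ℤ] ℤ where
  toFun x := aug G x / 2
  map_add' x y := by
    simp only [Submodule.coe_add, map_add]
    exact Int.add_ediv_of_dvd_left (two_dvd_aug G x)
  map_smul' n x := by
    simp only [SetLike.val_smul, map_zsmul, smul_eq_mul, RingHom.id_apply]
    exact Int.mul_ediv_assoc n (two_dvd_aug G x)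

lemma halfAug_apply (x : ↥((I2 G).restrictScalars ℤ)) : halfAug G x = aug G x / 2 := rfl

lemma two_mul_halfAug (x : ↥((I2 G).restrictScalars ℤ)) : 2 * halfAug G x = aug G x :=
  Int.mul_ediv_cancel' (two_dvd_aug G x)

lemma halfAug_twoI2 : halfAug G (twoI2 G) = 1 := by
  simp [halfAug_apply, twoI2, map_ofNat]

lemma halfAug_gm1 (g : G) : halfAug G (gm1 G g) = 0 := by
  simp [halfAug_apply, gm1, aug_single]

lemma halfAug_comp_inclI : halfAug G ∘ₗ inclI G = 0 := by
  ext a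
  have ha : aug G a = 0 := a.2
  simp [halfAug_apply, inclI, ha]

lemma halfAug_idealRep (g : G) (x : ↥((I2 G).restrictScalars ℤ)) :
    halfAug G (idealRep G (I2 G) g x) = halfAug G x := by
  have h : aug G (MonoidAlgebra.of ℤ G g * x) = aug G x := by
    rw [map_mul, MonoidAlgebra.of_apply, aug_single, one_mul]
  exact congrArg (· / 2) h

noncomputable def retractI : ↥((I2 G).restrictScalars ℤ) →ₗ[ℤ] ↥((augI G).restrictScalars ℤ) :=
  LinearMap.codRestrict _
    (((I2 G).restrictScalars ℤ).subtype - (halfAug G).smulRight (2 : MonoidAlgebra ℤ G))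
    fun x => by
      change aug G _ = 0
      simp [← two_mul_halfAug G x, mul_comm, map_ofNat]

lemma inclI_retractI (x : ↥((I2 G).restrictScalars ℤ)) :
    inclI G (retractI G x) = x - halfAug G x • twoI2 G :=
  rfl

theorem stmt7 :
    ∃ ψ : ↥(symTensors ↥((I2 G).restrictScalars ℤ)) →ₗ[ℤ] ↥((I2 G).restrictScalars ℤ),
      (∀ (g : G) (x : ↥(symTensors ↥((I2 G).restrictScalars ℤ))),
        ψ ((gammaRep (idealRep G (I2 G))) g x) = (idealRep G (I2 G)) g (ψ x)) ∧
      Function.Surjective ψ ∧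
      LinearMap.ker ψ = gammaISub G ∧
      ψ ⟨(twoI2 G) ⊗ₜ[ℤ] (twoI2 G), tmul_self_mem_symTensors _⟩ = twoI2 G ∧
      ∀ g : G, ψ ⟨(twoI2 G) ⊗ₜ[ℤ] (gm1 G g) + (gm1 G g) ⊗ₜ[ℤ] (twoI2 G),
          tmul_symm_mem_symTensors _ _⟩ = gm1 G g := by
  refine ⟨contractFst (halfAug G) ∘ₗ (symTensors _).subtype,
    fun g x => contractFst_tprod _ _ g (halfAug_idealRep G g) x,
    contractFst_comp_subtype_surjective _ (halfAug_twoI2 G),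
    ker_contractFst_comp_subtype _ (halfAug_comp_inclI G) (inclI_retractI G), ?_, fun g => ?_⟩
  · simp [halfAug_twoI2]
  · simp [halfAug_twoI2, halfAug_gm1]

end Stmt7
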